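/- arXiv:2409.06794 — 2 statements merged into one kernel-verified Lean document; each statement's English description precedes it below -/
import Mathlib

section
/- Let v = (v₁, v₂) with v₁, v₂ ∈ ℤ[i] (Gaussian integers) and let τ ∈ ℂ with Im τ > 0. Define the Hodge norm ‖v‖² = |v₁|²·Im τ + |v₂ − v₁·Re τ|²/Im τ. If v satisfies the anti-self-duality relation v₁ = v₂/conj(τ) and Im τ > L for some L ≥ ‖v‖², then v₁ = v₂ = 0. -/
open GaussianInt

lemma one_le_abs_sq (z : GaussianInt) (hz : z ≠ 0) :
    (1 : ℝ) ≤ ‖toComplex z‖ ^ 2 := by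
  rw [Complex.sq_norm, ← intCast_real_norm]
  have : 1 ≤ z.norm := by
    have := Zsqrtd.norm_eq_zero_iff (by norm_num : (-1 : ℤ) < 0) z
    have hn : z.norm ≠ 0 := fun h => hz (this.mp h)
    have := Zsqrtd.norm_nonneg (by norm_num : (-1 : ℤ) ≤ 0) z
    omega
  exact_mod_cast this

/-- If a Gaussian-integer flux `v = (v₁, v₂)` on the torus with modulus `τ` (Im τ > 0)
satisfies the anti-self-duality relation `v₁ = v₂ / conj τ` and its Hodge norm
`|v₁|²·Im τ + |v₂ − v₁·Re τ|²/Im τ` is at most `L < Im τ`, then `v₁ = v₂ = 0`. -/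
theorem stmt_0 (v₁ v₂ : GaussianInt) (τ : ℂ) (L : ℝ)
    (hτ : 0 < τ.im)
    (hsd : toComplex v₁ = toComplex v₂ / (starRingEnd ℂ) τ)
    (hL : ‖toComplex v₁‖ ^ 2 * τ.im
        + ‖toComplex v₂ - toComplex v₁ * (τ.re : ℂ)‖ ^ 2 / τ.im ≤ L)
    (him : L < τ.im) :
    v₁ = 0 ∧ v₂ = 0 := by
  have hv₁ : v₁ = 0 := by
    by_contra h
    have h1 : (1 : ℝ) ≤ ‖toComplex v₁‖ ^ 2 := one_le_abs_sq v₁ h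
    have hterm2 : 0 ≤ ‖toComplex v₂ - toComplex v₁ * (τ.re : ℂ)‖ ^ 2 / τ.im :=
      div_nonneg (sq_nonneg _) hτ.le
    nlinarith
  have hτne : (starRingEnd ℂ) τ ≠ 0 := by
    simp only [ne_eq, map_eq_zero]
    rintro rfl; simp at hτ
  have hv₂ : v₂ = 0 := by
    have : toComplex v₂ = 0 := by
      have := hsd
      rw [hv₁, toComplex_zero, eq_comm, div_eq_zero_iff] at this
      tauto
    exact toComplex_inj.mp (by simpa using this)
  exact ⟨hv₁, hv₂⟩
end

section
/- Let H_ℝ be a finite-dimensional real vector space with a bigraded splitting H_ℂ = ⊕_{p,q} ~I^{p,q} such that conjugation maps ~I^{p,q} to ~I^{q,p}. Fix an integer k and suppose u ∈ H_ℝ lies in ⊕_{p ≥ k, p+q ≤ 2k−2} ~I^{p,q}. Then u = 0. -/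
/-- `σ` is a conjugation (real structure) on the complex vector space `H`. -/
def IsRealConj {H : Type*} [AddCommGroup H] [Module ℂ H] (σ : H → H) : Prop :=
  (∀ x y : H, σ (x + y) = σ x + σ y) ∧
  (∀ (c : ℂ) (x : H), σ (c • x) = (starRingEnd ℂ c) • σ x) ∧
  (∀ x : H, σ (σ x) = x)

/-- Two bounded suprema of an independent family of submodules over disjoint index
predicates are disjoint. -/
lemma aux_disjoint_biSup {R M ι : Type*} [Ring R] [AddCommGroup M] [Module R M]
    [DecidableEq ι] {t : ι → Submodule R M} (h : iSupIndep t)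
    {P Q : ι → Prop} [DecidablePred P] [DecidablePred Q]
    (hPQ : ∀ i, P i → Q i → False) :
    Disjoint (⨆ (i) (_ : P i), t i) (⨆ (i) (_ : Q i), t i) := by
  rw [Submodule.disjoint_def]
  intro x hxA hxB
  rw [Submodule.mem_biSup_iff_exists_dfinsupp] at hxA hxB
  obtain ⟨f, hf⟩ := hxA
  obtain ⟨g, hg⟩ := hxB
  have hinj := h.dfinsupp_lsum_injective
  have heq : f.filter P = g.filter Q := hinj (by rw [hf, hg])
  have hz : f.filter P = 0 := by
    ext i
    by_cases hp : P i
    · have := DFunLike.congr_fun heq i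
      rw [DFinsupp.filter_apply, DFinsupp.filter_apply] at this
      simp only [hp, if_true] at this
      have hq : ¬ Q i := fun hq => hPQ i hp hq
      simp only [hq, if_false] at this
      simp [DFinsupp.filter_apply, hp, this]
    · simp [DFinsupp.filter_apply, hp]
  rw [← hf, hz, map_zero]

/-- Reality argument: given a bigraded splitting `H = ⊕_{p,q} ~I^{p,q}` of a
finite-dimensional complex vector space with conjugation mapping `~I^{p,q}` to `~I^{q,p}`,
a real element `u` (i.e. `σ u = u`) lying in `⊕_{p ≥ k, p+q ≤ 2k-2} ~I^{p,q}` must vanish. -/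
theorem stmt_17 {H : Type*} [AddCommGroup H] [Module ℂ H] [FiniteDimensional ℂ H]
    (σ : H → H) (hσ : IsRealConj σ)
    (I : ℤ → ℤ → Submodule ℂ H)
    (hI : DirectSum.IsInternal (fun pq : ℤ × ℤ => I pq.1 pq.2))
    (hconj : ∀ p q : ℤ, σ '' (I p q : Set H) = (I q p : Set H))
    (k : ℤ) (u : H) (hu : σ u = u)
    (hmem : u ∈ ⨆ (p : ℤ) (q : ℤ) (_ : k ≤ p ∧ p + q ≤ 2 * k - 2), I p q) :
    u = 0 := by
  classical
  obtain ⟨hadd, hsmul, hinv⟩ := hσ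
  set J : ℤ × ℤ → Submodule ℂ H := fun pq => I pq.1 pq.2 with hJ
  set P : ℤ × ℤ → Prop := fun pq => k ≤ pq.1 ∧ pq.1 + pq.2 ≤ 2 * k - 2 with hP
  set Q : ℤ × ℤ → Prop := fun pq => k ≤ pq.2 ∧ pq.1 + pq.2 ≤ 2 * k - 2 with hQ
  -- u is in the biSup over P
  have hA : u ∈ ⨆ (pq : ℤ × ℤ) (_ : P pq), J pq := by
    rw [show (⨆ (pq : ℤ × ℤ) (_ : P pq), J pq)
        = ⨆ (p : ℤ) (q : ℤ) (_ : P (p, q)), J (p, q) from iSup_prod]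
    exact hmem
  -- σ u is in the biSup over Q
  have hσzero : σ 0 = 0 := by
    have := hadd 0 0
    rw [add_zero] at this
    exact right_eq_add.mp this
  have hB : σ u ∈ ⨆ (pq : ℤ × ℤ) (_ : Q pq), J pq := by
    refine Submodule.iSup_induction (motive := fun x => σ x ∈ ⨆ (pq : ℤ × ℤ) (_ : Q pq), J pq)
      (fun pq : ℤ × ℤ => ⨆ (_ : P pq), J pq) hA ?_ ?_ ?_
    · intro pq x hx
      have hx' : x ∈ ⨆ (_ : P pq), J pq := hx
      by_cases hp : P pq
      · rw [iSup_pos hp] at hx'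
        have hσx : σ x ∈ I pq.2 pq.1 := by
          have h1 : σ x ∈ σ '' (I pq.1 pq.2 : Set H) := ⟨x, hx', rfl⟩
          rwa [hconj] at h1
        have hq : Q (pq.2, pq.1) := ⟨hp.1, by omega⟩
        exact Submodule.mem_iSup_of_mem (pq.2, pq.1) (Submodule.mem_iSup_of_mem hq hσx)
      · rw [iSup_neg hp] at hx'
        rw [Submodule.mem_bot] at hx'
        rw [hx', hσzero]
        exact Submodule.zero_mem _
    · show σ (0 : H) ∈ _
      rw [hσzero]; exact Submodule.zero_mem _
    · intro x y hx hy
      rw [hadd]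
      exact Submodule.add_mem _ hx hy
  rw [hu] at hB
  have hdisj : Disjoint (⨆ (pq : ℤ × ℤ) (_ : P pq), J pq)
      (⨆ (pq : ℤ × ℤ) (_ : Q pq), J pq) :=
    aux_disjoint_biSup hI.submodule_iSupIndep (fun pq hp hq => by
      have := hp.1; have := hq.1; have := hp.2; omega)
  exact Submodule.disjoint_def.mp hdisj u hA hB
end
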